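/- Let ψ be a state of n qubits, viewed as an element of (ℂ²)^⊗n, with Schmidt rank r across the bipartition {1,…,i} | {i+1,…,n}. If a 2-qubit unitary U is applied to qubits i and i+1 (one on each side of the cut), then the resulting state has Schmidt rank at most 4r across the same bipartition. -/

import Mathlib

/-- The matrix of a state `ψ` of `n` qubits across the cut `{1,…,s}|{s+1,…,n}`:
rows are indexed by the bits of the first `s` qubits, columns by the bits of the
remaining `n - s` qubits. -/
noncomputable def cutMatrix {n : ℕ} (ψ : (Fin n → Fin 2) → ℂ) (s : ℕ) :
    Matrix (Fin s → Fin 2) (Fin (n - s) → Fin 2) ℂ := fun xl xr =>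
  ψ (fun i => if h : i.val < s then xl ⟨i.val, h⟩
      else xr ⟨i.val - s, by have := i.isLt; omega⟩)

/-- The Schmidt rank of an `n`-qubit state across the cut `{1,…,s}|{s+1,…,n}`:
the rank of `ψ` viewed as a linear map (matrix) between the two tensor factors. -/
noncomputable def schmidtRankAt {n : ℕ} (ψ : (Fin n → Fin 2) → ℂ) (s : ℕ) : ℕ :=
  (cutMatrix ψ s).rank

/-- Application of a 2-qubit gate `U` to the adjacent qubits `c` and `c+1`
(0-indexed) of an `n`-qubit state, acting as the identity elsewhere. -/
noncomputable def applyGate2 {n : ℕ} (U : Matrix (Fin 2 × Fin 2) (Fin 2 × Fin 2) ℂ)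
    (c : ℕ) (hc : c + 1 < n) (ψ : (Fin n → Fin 2) → ℂ) : (Fin n → Fin 2) → ℂ :=
  fun x => ∑ a : Fin 2, ∑ b : Fin 2,
    U (x ⟨c, by omega⟩, x ⟨c + 1, hc⟩) (a, b) *
      ψ (Function.update (Function.update x ⟨c, by omega⟩ a) ⟨c + 1, hc⟩ b)

/-! ### Auxiliary rank lemmas -/

lemma rank_add_le' {m n : Type*} [Fintype m] [Fintype n]
    (A B : Matrix m n ℂ) : (A + B).rank ≤ A.rank + B.rank := by
  classical
  rw [Matrix.rank, Matrix.rank, Matrix.rank, Matrix.mulVecLin_add]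
  refine le_trans (Submodule.finrank_mono ?_)
    (Submodule.finrank_add_le_finrank_add_finrank _ _)
  rintro x ⟨v, rfl⟩
  exact Submodule.add_mem_sup ⟨v, rfl⟩ ⟨v, rfl⟩

lemma rank_sum_le' {m n ι : Type*} [Fintype m] [Fintype n]
    (s : Finset ι) (A : ι → Matrix m n ℂ) :
    (∑ i ∈ s, A i).rank ≤ ∑ i ∈ s, (A i).rank := by
  classical
  induction s using Finset.induction with
  | empty => simp
  | insert _ _ h ih =>
      rw [Finset.sum_insert h, Finset.sum_insert h]
      exact (rank_add_le' _ _).trans (add_le_add_right ih _)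

/-! ### The operator-Schmidt decomposition of the gate across the cut -/

/-- Left factor of the `k`-th term of the decomposition. -/
noncomputable def Lmat (c : ℕ) (k : Fin 2 × Fin 2) :
    Matrix (Fin (c+1) → Fin 2) (Fin (c+1) → Fin 2) ℂ := fun x y =>
  if Function.update x ⟨c, Nat.lt_succ_self c⟩ k.2 = y then
    (if x ⟨c, Nat.lt_succ_self c⟩ = k.1 then 1 else 0) else 0

/-- Right factor of the `k`-th term of the decomposition. -/
noncomputable def Rmat {n c : ℕ} (hc : c + 1 < n)
    (U : Matrix (Fin 2 × Fin 2) (Fin 2 × Fin 2) ℂ) (k : Fin 2 × Fin 2) :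
    Matrix (Fin (n - (c+1)) → Fin 2) (Fin (n - (c+1)) → Fin 2) ℂ := fun y z =>
  ∑ b : Fin 2, if Function.update z ⟨0, by omega⟩ b = y then
    U (k.1, z ⟨0, by omega⟩) (k.2, b) else 0

lemma update_glue {n c : ℕ} (hc : c + 1 < n)
    (x : Fin (c+1) → Fin 2) (z : Fin (n - (c+1)) → Fin 2) (a b : Fin 2) :
    Function.update (Function.update
        (fun i : Fin n => if h : i.val < c + 1 then x ⟨i.val, h⟩
          else z ⟨i.val - (c+1), by have := i.isLt; omega⟩) ⟨c, by omega⟩ a) ⟨c + 1, hc⟩ b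
      = fun i : Fin n => if h : i.val < c + 1 then
          Function.update x ⟨c, Nat.lt_succ_self c⟩ a ⟨i.val, h⟩
        else Function.update z ⟨0, by omega⟩ b ⟨i.val - (c+1), by have := i.isLt; omega⟩ := by
  funext i
  simp only [Function.update_apply, Fin.ext_iff]
  split_ifs <;> first | rfl | omega

lemma key_eq {n c : ℕ} (hc : c + 1 < n) (U : Matrix (Fin 2 × Fin 2) (Fin 2 × Fin 2) ℂ)
    (ψ : (Fin n → Fin 2) → ℂ) :
    cutMatrix (applyGate2 U c hc ψ) (c+1)
      = ∑ k : Fin 2 × Fin 2, Lmat c k * cutMatrix ψ (c+1) * Rmat hc U k := by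
  classical
  set M := cutMatrix ψ (c+1) with hM
  set ic : Fin (c+1) := ⟨c, Nat.lt_succ_self c⟩ with hic
  set i0 : Fin (n - (c+1)) := ⟨0, by omega⟩ with hi0
  ext x z
  have hstep : ∀ k : Fin 2 × Fin 2,
      (Lmat c k * M * Rmat hc U k) x z
        = (if x ic = k.1 then 1 else 0) *
            ∑ b : Fin 2, M (Function.update x ic k.2) (Function.update z i0 b) *
              U (k.1, z i0) (k.2, b) := by
    intro k
    rw [Matrix.mul_apply]
    have hLM : ∀ y2, (Lmat c k * M) x y2
        = (if x ic = k.1 then 1 else 0) * M (Function.update x ic k.2) y2 := by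
      intro y2
      rw [Matrix.mul_apply]
      simp [Lmat, ite_mul, zero_mul, Finset.sum_ite_eq]
      rfl
    simp only [hLM, Rmat, Finset.mul_sum]
    rw [Finset.sum_comm]
    refine Finset.sum_congr rfl fun b _ => ?_
    simp only [mul_ite, mul_zero, Finset.sum_ite_eq, Finset.mem_univ, if_true, mul_assoc]
    rfl
  have hRHS : (∑ k : Fin 2 × Fin 2, Lmat c k * M * Rmat hc U k) x z
      = ∑ a : Fin 2, ∑ b : Fin 2,
          U (x ic, z i0) (a, b) * M (Function.update x ic a) (Function.update z i0 b) := by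
    rw [Matrix.sum_apply]
    simp only [hstep]
    rw [Fintype.sum_prod_type, Finset.sum_comm]
    simp only [boole_mul, Finset.sum_ite_eq, Finset.mem_univ, if_true]
    exact Finset.sum_congr rfl fun a _ => Finset.sum_congr rfl fun b _ => mul_comm _ _
  rw [hRHS, hM]
  simp only [cutMatrix, applyGate2]
  refine Finset.sum_congr rfl fun a _ => Finset.sum_congr rfl fun b _ => ?_
  rw [update_glue hc]
  simp [hic, hi0]

/-- Applying a 2-qubit unitary to qubits `c, c+1` lying on the two sides of the
cut after the first `c+1` qubits increases the Schmidt rank across that cut by a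
factor of at most 4. -/
theorem schmidtRankAt_applyGate2_le {n : ℕ} (c : ℕ) (hc : c + 1 < n)
    (U : Matrix (Fin 2 × Fin 2) (Fin 2 × Fin 2) ℂ)
    (hU : U ∈ Matrix.unitaryGroup (Fin 2 × Fin 2) ℂ)
    (ψ : (Fin n → Fin 2) → ℂ) (r : ℕ) (hr : schmidtRankAt ψ (c + 1) = r) :
    schmidtRankAt (applyGate2 U c hc ψ) (c + 1) ≤ 4 * r := by
  classical
  unfold schmidtRankAt
  rw [key_eq hc U ψ]
  calc (∑ k : Fin 2 × Fin 2, Lmat c k * cutMatrix ψ (c+1) * Rmat hc U k).rank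
      ≤ ∑ k : Fin 2 × Fin 2, (Lmat c k * cutMatrix ψ (c+1) * Rmat hc U k).rank :=
        rank_sum_le' _ _
    _ ≤ ∑ _k : Fin 2 × Fin 2, r := by
        refine Finset.sum_le_sum fun k _ => ?_
        calc (Lmat c k * cutMatrix ψ (c+1) * Rmat hc U k).rank
            ≤ (Lmat c k * cutMatrix ψ (c+1)).rank := Matrix.rank_mul_le_left _ _
          _ ≤ (cutMatrix ψ (c+1)).rank := Matrix.rank_mul_le_right _ _
          _ = r := hr
    _ = 4 * r := by simp [Finset.card_univ, mul_comm]
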